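/- arXiv:1907.00752 — 9 statements merged into one kernel-verified Lean document; each statement's English description precedes it below -/
import Mathlib

section
/- Let A be a total order (axis) on a finite candidate set C and let V be a strict partial order on C. If V contains a u-valley with respect to A (i.e., there exist distinct a,b,c,d ∈ C with a ⊳ b ⊳ d and a ⊳ c ⊳ d on A, a ≻ b and d ≻ c in V), then every linear extension of V to a total order on C contains a v-valley with respect to A (i.e., three candidates x ⊳ y ⊳ z on A with x ≻ y and z ≻ y). -/
def VValley {C : Type*} (A V : C → C → Prop) : Prop :=
  ∃ c1 c2 c3 : C, A c1 c2 ∧ A c2 c3 ∧ V c1 c2 ∧ V c3 c2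

def UValley {C : Type*} (A V : C → C → Prop) : Prop :=
  ∃ a b c d : C, a ≠ b ∧ a ≠ c ∧ a ≠ d ∧ b ≠ c ∧ b ≠ d ∧ c ≠ d ∧
    A a b ∧ A b d ∧ A a c ∧ A c d ∧ V a b ∧ V d c

def Extends {C : Type*} (V T : C → C → Prop) : Prop :=
  ∀ x y, V x y → T x y

/-- `V` is a strict partial order: asymmetric and transitive. -/
def IsSPO {C : Type*} (V : C → C → Prop) : Prop :=
  (∀ x y, V x y → ¬ V y x) ∧ (∀ x y z, V x y → V y z → V x z)

/-- `V` is a strict weak order: a strict partial order with transitive incomparability. -/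
def IsSWO {C : Type*} (V : C → C → Prop) : Prop :=
  IsSPO V ∧ ∀ x y z, (¬ V x y ∧ ¬ V y x) → (¬ V y z ∧ ¬ V z y) → (¬ V x z ∧ ¬ V z x)

/-- `V` possibly single-peaked w.r.t. axis `A`: it extends to a total order with no v-valley. -/
def PossSP {C : Type*} (A V : C → C → Prop) : Prop :=
  ∃ T : C → C → Prop, IsStrictTotalOrder C T ∧ Extends V T ∧ ¬ VValley A T

/-- If neither `(a, b, d)` nor `(a, c, d)` is a v-valley of `T`, then `c, a, b, d, c` is a
`T`-cycle. -/
theorem VValley.of_isStrictTotalOrder {C : Type*} {A T : C → C → Prop}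
    (hT : IsStrictTotalOrder C T) {a b c d : C} (hac : a ≠ c) (hbd : b ≠ d)
    (Aab : A a b) (Abd : A b d) (Aac : A a c) (Acd : A c d) (Tab : T a b) (Tdc : T d c) :
    VValley A T := by
  have := hT
  rcases trichotomous_of T d b with Tdb | rfl | Tbd
  · exact ⟨a, b, d, Aab, Abd, Tab, Tdb⟩
  · exact absurd rfl hbd
  rcases trichotomous_of T a c with Tac | rfl | Tca
  · exact ⟨a, c, d, Aac, Acd, Tac, Tdc⟩
  · exact absurd rfl hac
  exact absurd (trans_of T (trans_of T (trans_of T Tca Tab) Tbd) Tdc) (irrefl c)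

theorem stmt0_general {C : Type*} (A V : C → C → Prop)
    (hu : UValley A V) :
    ∀ T : C → C → Prop, IsStrictTotalOrder C T → Extends V T → VValley A T := by
  obtain ⟨a, b, c, d, -, hac, -, -, hbd, -, Aab, Abd, Aac, Acd, Vab, Vdc⟩ := hu
  intro T hT hext
  exact VValley.of_isStrictTotalOrder hT hac hbd Aab Abd Aac Acd (hext _ _ Vab) (hext _ _ Vdc)

theorem stmt0 {C : Type*} [Fintype C] (A V : C → C → Prop)
    (hA : IsStrictTotalOrder C A) (hV : IsSPO V)
    (hu : UValley A V) :
    ∀ T : C → C → Prop, IsStrictTotalOrder C T → Extends V T → VValley A T :=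
  stmt0_general A V hu
end

section
/- Let A be a total order (axis) on a finite candidate set C and let V be a strict partial order on C. If V contains neither a u-valley nor a v-valley with respect to A, then V can be extended to a strict total order V' on C such that V' contains no v-valley with respect to A (i.e., V' is single-peaked with respect to A). -/
/-!
Peel the axis from its ends. In any nonempty set of candidates, the leftmost or the rightmost
one is preferred by `V` to no other candidate of the set: if the leftmost `l` beats `b` and the
rightmost `r` beats `c`, then `l, b, c, r` form a u-valley, or a v-valley when `b = c` or when one
of `b, c` is an endpoint (using transitivity of `V`). Putting such an endpoint at the bottom and
recursing on the rest yields a linear extension of `V`. It has no v-valley: a candidate is an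
endpoint of what remains when it is removed, so one of any two candidates flanking it on the axis
was removed before it and ranks below it.
-/

namespace IsSPO

variable {C : Type*} {V : C → C → Prop}

theorem asymm (hV : IsSPO V) {x y : C} (h : V x y) : ¬ V y x := hV.1 x y h

theorem trans (hV : IsSPO V) {x y z : C} (hxy : V x y) (hyz : V y z) : V x z :=
  hV.2 x y z hxy hyz

theorem ne (hV : IsSPO V) {x y : C} (h : V x y) : x ≠ y := by
  rintro rfl
  exact hV.asymm h h

end IsSPO

section

variable {C : Type*} (A V : C → C → Prop)

theorem exists_extreme_not_dominating (hA : IsStrictTotalOrder C A) (hV : IsSPO V)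
    (hnu : ¬ UValley A V) (hnv : ¬ VValley A V) {S : Finset C} (hS : S.Nonempty) :
    ∃ e ∈ S, (∀ a ∈ S, ∀ b ∈ S, ¬ (A a e ∧ A e b)) ∧ ∀ y ∈ S, ¬ V e y := by
  classical
  let : LinearOrder C := linearOrderOfSTO A
  set l := S.min' hS
  set r := S.max' hS
  by_cases hl : ∀ y ∈ S, ¬ V l y
  · exact ⟨l, S.min'_mem hS, fun a ha _ _ h => (S.min'_le a ha).not_gt h.1, hl⟩
  by_cases hr : ∀ y ∈ S, ¬ V r y
  · exact ⟨r, S.max'_mem hS, fun _ _ b hb h => (S.le_max' b hb).not_gt h.2, hr⟩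
  exfalso
  push Not at hl hr
  obtain ⟨b, hb, hlb⟩ := hl
  obtain ⟨c, hc, hrc⟩ := hr
  have hl_lt : ∀ x ∈ S, x ≠ l → A l x := fun x hx hxl => (S.min'_le x hx).lt_of_ne' hxl
  have hlt_r : ∀ x ∈ S, x ≠ r → A x r := fun x hx hxr => (S.le_max' x hx).lt_of_ne hxr
  have hbl : b ≠ l := (hV.ne hlb).symm
  have hcr : c ≠ r := (hV.ne hrc).symm
  obtain rfl | hbr := eq_or_ne b r
  · have hcl : c ≠ l := by
      rintro rfl
      exact hV.asymm hlb hrc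
    exact hnv ⟨l, c, r, hl_lt c hc hcl, hlt_r c hc hcr, hV.trans hlb hrc, hrc⟩
  obtain rfl | hcl := eq_or_ne c l
  · exact hnv ⟨l, b, r, hl_lt b hb hbl, hlt_r b hb hbr, hlb, hV.trans hrc hlb⟩
  obtain rfl | hbc := eq_or_ne b c
  · exact hnv ⟨l, b, r, hl_lt b hb hbl, hlt_r b hb hbr, hlb, hrc⟩
  have hlr : l ≠ r := (lt_trans (hl_lt b hb hbl) (hlt_r b hb hbr)).ne
  exact hnu ⟨l, b, c, r, hbl.symm, hcl.symm, hlr, hbc, hbr, hcr,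
    hl_lt b hb hbl, hlt_r b hb hbr, hl_lt c hc hcl, hlt_r c hc hcr, hlb, hrc⟩

theorem exists_rank_of_no_valley (hA : IsStrictTotalOrder C A) (hV : IsSPO V)
    (hnu : ¬ UValley A V) (hnv : ¬ VValley A V) (S : Finset C) :
    ∃ r : C → ℕ, Set.InjOn r S ∧ (∀ x ∈ S, ∀ y ∈ S, V x y → r y < r x) ∧
      ∀ c₁ ∈ S, ∀ c₂ ∈ S, ∀ c₃ ∈ S, A c₁ c₂ → A c₂ c₃ → ¬ (r c₂ < r c₁ ∧ r c₂ < r c₃) := by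
  classical
  induction S using Finset.strongInduction with
  | H S ih =>
  rcases S.eq_empty_or_nonempty with rfl | hS
  · exact ⟨fun _ => 0, by simp, by simp, by simp⟩
  obtain ⟨e, he, he_extreme, he_bottom⟩ :=
    exists_extreme_not_dominating A V hA hV hnu hnv hS
  obtain ⟨r, hinj, hmono, hpeak⟩ := ih (S.erase e) (Finset.erase_ssubset he)
  have mem_erase {x} (hx : x ∈ S) (hxe : x ≠ e) : x ∈ S.erase e := Finset.mem_erase.2 ⟨hxe, hx⟩
  refine ⟨fun x => if x = e then 0 else r x + 1, ?_, ?_, ?_⟩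
  · intro x hx y hy hxy
    by_cases hxe : x = e <;> by_cases hye : y = e
    · exact hxe.trans hye.symm
    · simp [hxe, hye] at hxy
    · simp [hxe, hye] at hxy
    · exact hinj (mem_erase hx hxe) (mem_erase hy hye) (by simpa [hxe, hye] using hxy)
  · intro x hx y hy hxy
    have hxe : x ≠ e := by
      rintro rfl
      exact he_bottom y hy hxy
    by_cases hye : y = e
    · simp [hxe, hye]
    · simpa [hxe, hye] using hmono x (mem_erase hx hxe) y (mem_erase hy hye) hxy
  · intro c₁ h₁ c₂ h₂ c₃ h₃ h₁₂ h₂₃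
    have h₂e : c₂ ≠ e := by
      rintro rfl
      exact he_extreme c₁ h₁ c₃ h₃ ⟨h₁₂, h₂₃⟩
    by_cases h₁e : c₁ = e
    · simp [h₁e, h₂e]
    by_cases h₃e : c₃ = e
    · simp [h₃e, h₂e]
    simpa [h₁e, h₂e, h₃e] using
      hpeak c₁ (mem_erase h₁ h₁e) c₂ (mem_erase h₂ h₂e) c₃ (mem_erase h₃ h₃e) h₁₂ h₂₃

end

theorem stmt2 {C : Type*} [Fintype C] (A V : C → C → Prop)
    (hA : IsStrictTotalOrder C A) (hV : IsSPO V)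
    (hnu : ¬ UValley A V) (hnv : ¬ VValley A V) :
    ∃ V' : C → C → Prop, IsStrictTotalOrder C V' ∧ Extends V V' ∧ ¬ VValley A V' := by
  obtain ⟨r, hinj, hmono, hpeak⟩ := exists_rank_of_no_valley A V hA hV hnu hnv Finset.univ
  rw [Finset.coe_univ, Set.injOn_univ] at hinj
  let : LinearOrder C := LinearOrder.lift' r hinj
  refine ⟨(· > ·), inferInstance, fun x y hxy => hmono x (by simp) y (by simp) hxy, ?_⟩
  rintro ⟨c₁, c₂, c₃, h₁₂, h₂₃, h₁, h₃⟩
  exact hpeak c₁ (by simp) c₂ (by simp) c₃ (by simp) h₁₂ h₂₃ ⟨h₁, h₃⟩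
end

section
/- Let A be a total order on a finite candidate set C and let V be a strict partial order on C. Then V can be extended to a strict total order that is single-peaked with respect to A if and only if V contains neither a u-valley nor a v-valley with respect to A. -/
/-! Every extension inherits the v-valleys of `V`, and a u-valley of `V` forces one in it.
Conversely, without valleys the extension is built from the bottom up, the next-worst candidate
always being chosen at an `A`-end of the still unranked ones, so that it is never the bottom of
a v-valley. -/

section

variable {C : Type*} {A V T : C → C → Prop}

theorem rel_or_rel_of_ne {r : C → C → Prop} [Std.Trichotomous r] {a b : C} (h : a ≠ b) :
    r a b ∨ r b a :=
  (trichotomous_of r a b).imp_right (Or.resolve_left · h)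

theorem IsSPO.ne_s3 (hV : IsSPO V) {a b : C} (h : V a b) : a ≠ b := by
  rintro rfl
  exact hV.1 a a h h

theorem VValley.mono (hVT : Extends V T) : VValley A V → VValley A T
  | ⟨c₁, c₂, c₃, hA₁₂, hA₂₃, hV₁₂, hV₃₂⟩ => ⟨c₁, c₂, c₃, hA₁₂, hA₂₃, hVT _ _ hV₁₂, hVT _ _ hV₃₂⟩

/- The `T`-worse of `b` and `c` is the bottom of a v-valley of `T`, flanked by the other one
and by `a` or `d`. -/
theorem UValley.vValley_of_extends [IsStrictTotalOrder C A] [IsStrictTotalOrder C T]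
    (hVT : Extends V T) : UValley A V → VValley A T := by
  rintro ⟨a, b, c, d, -, -, -, hbc, -, -, hab, hbd, hac, hcd, vab, vdc⟩
  have tab := hVT _ _ vab
  have tdc := hVT _ _ vdc
  rcases rel_or_rel_of_ne (r := T) hbc with tbc | tcb <;>
    rcases rel_or_rel_of_ne (r := A) hbc with abc | acb
  · exact ⟨b, c, d, abc, hcd, tbc, tdc⟩
  · exact ⟨a, c, b, hac, acb, _root_.trans tab tbc, tbc⟩
  · exact ⟨a, b, c, hab, abc, tab, tcb⟩
  · exact ⟨c, b, d, acb, hbd, tcb, _root_.trans tdc tcb⟩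

/- Without valleys, the `A`-leftmost or the `A`-rightmost element of `S` is `V`-above nothing
in `S`: otherwise the two elements they are `V`-above give a u-valley, or a v-valley if they
coincide or one of them is an end of `S`. -/
theorem exists_end_forall_not_rel [Finite C] [IsStrictTotalOrder C A] (hV : IsSPO V)
    (hU : ¬ UValley A V) (hVV : ¬ VValley A V) {S : Finset C} (hS : S.Nonempty) :
    ∃ e ∈ S, ((∀ z ∈ S, ¬ A z e) ∨ (∀ z ∈ S, ¬ A e z)) ∧ ∀ z ∈ S, ¬ V e z := by
  obtain ⟨l, hl, hl_min⟩ := (Finite.wellFounded_of_trans_of_irrefl A).has_min S hS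
  obtain ⟨r, hr, hr_max⟩ :=
    (Finite.wellFounded_of_trans_of_irrefl (Function.swap A)).has_min S hS
  by_cases hl_bot : ∀ z ∈ S, ¬ V l z
  · exact ⟨l, hl, Or.inl hl_min, hl_bot⟩
  by_cases hr_bot : ∀ z ∈ S, ¬ V r z
  · exact ⟨r, hr, Or.inr hr_max, hr_bot⟩
  exfalso
  push Not at hl_bot hr_bot
  obtain ⟨x, hx, vlx⟩ := hl_bot
  obtain ⟨y, hy, vry⟩ := hr_bot
  have right_of_l : ∀ {z}, z ∈ S → l ≠ z → A l z := fun hz hne =>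
    (rel_or_rel_of_ne hne).resolve_right (hl_min _ hz)
  have left_of_r : ∀ {z}, z ∈ S → z ≠ r → A z r := fun hz hne =>
    (rel_or_rel_of_ne hne).resolve_right (hr_max _ hz)
  have alx := right_of_l hx (hV.ne_s3 vlx)
  have ayr := left_of_r hy (hV.ne_s3 vry).symm
  rcases eq_or_ne x y with rfl | hxy
  · exact hVV ⟨l, x, r, alx, ayr, vlx, vry⟩
  by_cases hxr : x = r
  · have vly := hV.2 _ _ _ (hxr ▸ vlx) vry
    exact hVV ⟨l, y, r, right_of_l hy (hV.ne_s3 vly), ayr, vly, vry⟩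
  by_cases hyl : y = l
  · have vrx := hV.2 _ _ _ (hyl ▸ vry) vlx
    exact hVV ⟨l, x, r, alx, left_of_r hx (hV.ne_s3 vrx).symm, vlx, vrx⟩
  have axr := left_of_r hx hxr
  have hlr : l ≠ r := fun h => hl_min x hx (h ▸ axr)
  exact hU ⟨l, x, y, r, hV.ne_s3 vlx, Ne.symm hyl, hlr, hxy, hxr, (hV.ne_s3 vry).symm,
    alx, axr, right_of_l hy (Ne.symm hyl), ayr, vlx, vry⟩

structure IsSinglePeakedRanking (A V : C → C → Prop) (S : Finset C) (r : C → ℕ) : Prop where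
  injOn : Set.InjOn r S
  lt_of_rel : ∀ x ∈ S, ∀ y ∈ S, V x y → r y < r x
  lt_of_between : ∀ x ∈ S, ∀ y ∈ S, ∀ z ∈ S, A x y → A y z → r x < r y ∨ r z < r y

theorem IsSinglePeakedRanking.of_erase [DecidableEq C] {S : Finset C} {e : C} {r : C → ℕ}
    (hr : IsSinglePeakedRanking A V (S.erase e) r)
    (he_end : (∀ z ∈ S, ¬ A z e) ∨ (∀ z ∈ S, ¬ A e z)) (he_bot : ∀ z ∈ S, ¬ V e z) :
    IsSinglePeakedRanking A V S (fun x => if x = e then 0 else r x + 1) := by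
  have hmem : ∀ {x}, x ∈ S → x ≠ e → x ∈ S.erase e := fun hx hxe =>
    Finset.mem_erase.2 ⟨hxe, hx⟩
  refine ⟨?_, ?_, ?_⟩
  · intro x hx y hy hxy
    simp only at hxy
    split_ifs at hxy with hxe hye hye
    · exact hxe.trans hye.symm
    · exact hr.injOn (hmem hx hxe) (hmem hy hye) (Nat.succ_injective hxy)
  · intro x hx y hy hxy
    have hxe : x ≠ e := by
      rintro rfl
      exact he_bot y hy hxy
    by_cases hye : y = e
    · simp [hxe, hye]
    · simpa [hxe, hye] using hr.lt_of_rel x (hmem hx hxe) y (hmem hy hye) hxy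
  · intro x hx y hy z hz hxy hyz
    have hye : y ≠ e := by
      rintro rfl
      exact he_end.elim (fun h => h x hx hxy) (fun h => h z hz hyz)
    by_cases hxe : x = e
    · simp [hxe, hye]
    by_cases hze : z = e
    · simp [hze, hye]
    simpa [hxe, hye, hze] using
      hr.lt_of_between x (hmem hx hxe) y (hmem hy hye) z (hmem hz hze) hxy hyz

theorem exists_isSinglePeakedRanking [Finite C] [IsStrictTotalOrder C A] (hV : IsSPO V)
    (hU : ¬ UValley A V) (hVV : ¬ VValley A V) (S : Finset C) :
    ∃ r, IsSinglePeakedRanking A V S r := by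
  classical
  induction S using Finset.strongInduction with
  | H S ih =>
    rcases S.eq_empty_or_nonempty with rfl | hS
    · exact ⟨fun _ => 0, by simp, by simp, by simp⟩
    obtain ⟨e, he, he_end, he_bot⟩ := exists_end_forall_not_rel hV hU hVV hS
    obtain ⟨r, hr⟩ := ih _ (Finset.erase_ssubset he)
    exact ⟨_, hr.of_erase he_end he_bot⟩

theorem IsSinglePeakedRanking.possSP [Fintype C] {r : C → ℕ}
    (hr : IsSinglePeakedRanking A V Finset.univ r) : PossSP A V := by
  refine ⟨InvImage (· > ·) r,
    { InvImage.trichotomous fun x y h => hr.injOn (by simp) (by simp) h with }, ?_, ?_⟩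
  · exact fun x y => hr.lt_of_rel x (Finset.mem_univ x) y (Finset.mem_univ y)
  · rintro ⟨x, y, z, hxy, hyz, hyx, hyz'⟩
    have := hr.lt_of_between x (Finset.mem_univ x) y (Finset.mem_univ y) z (Finset.mem_univ z)
      hxy hyz
    simp only [InvImage] at hyx hyz'
    omega

end

theorem stmt3 {C : Type*} [Fintype C] (A V : C → C → Prop)
    (hA : IsStrictTotalOrder C A) (hV : IsSPO V) :
    (∃ T : C → C → Prop, IsStrictTotalOrder C T ∧ Extends V T ∧ ¬ VValley A T) ↔
      (¬ UValley A V ∧ ¬ VValley A V) := by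
  constructor
  · rintro ⟨T, hT, hVT, hT_sp⟩
    exact ⟨fun hU => hT_sp (hU.vValley_of_extends hVT), fun hVV => hT_sp (hVV.mono hVT)⟩
  · rintro ⟨hU, hVV⟩
    obtain ⟨r, hr⟩ := exists_isSinglePeakedRanking hV hU hVV Finset.univ
    exact hr.possSP
end

section
/- Let C be a finite candidate set and let P be a profile (finite family) of strict total orders on C, each single-peaked with respect to a common axis A. Then the set of candidates that appear as the bottom-ranked candidate of some vote in P has cardinality at most 2. -/
/-!
In a vote single-peaked along the axis, a candidate with an axis-neighbour on each side cannot be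
ranked last: together with those two neighbours it would form a valley. So every bottom-ranked
candidate is one of the two ends of the axis.
-/

section Bottom

variable {C : Type*} {r : C → C → Prop}

theorem subsingleton_setOf_forall_not_rel [Std.Trichotomous r] :
    {c | ∀ a, ¬ r a c}.Subsingleton := by
  intro x hx y hy
  rcases trichotomous_of r x y with hxy | hxy | hyx
  · exact absurd hxy (hy x)
  · exact hxy
  · exact absurd hyx (hx y)

theorem Set.Subsingleton.ncard_le_one {s : Set C} (hs : s.Subsingleton) : s.ncard ≤ 1 :=
  (Set.ncard_le_one_iff hs.finite).2 fun ha hb => hs ha hb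

theorem ncard_le_two_of_subset_setOf_isEnd [Std.Trichotomous r] {s : Set C}
    (hs : s ⊆ {c | (∀ a, ¬ r a c) ∨ ∀ b, ¬ r c b}) : s.ncard ≤ 2 := by
  have hmin : {c | ∀ a, ¬ r a c}.Subsingleton := subsingleton_setOf_forall_not_rel
  have hmax : {c | ∀ b, ¬ r c b}.Subsingleton :=
    subsingleton_setOf_forall_not_rel (r := Function.swap r)
  calc s.ncard
      ≤ ({c | ∀ a, ¬ r a c} ∪ {c | ∀ b, ¬ r c b}).ncard :=
        Set.ncard_le_ncard hs (hmin.finite.union hmax.finite)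
    _ ≤ {c | ∀ a, ¬ r a c}.ncard + {c | ∀ b, ¬ r c b}.ncard := Set.ncard_union_le _ _
    _ ≤ 2 := add_le_add hmin.ncard_le_one hmax.ncard_le_one

theorem isEnd_of_forall_ne_rel_of_not_vValley [Std.Irrefl r] {V : C → C → Prop}
    (hV : ¬ VValley r V) {c : C} (hc : ∀ c', c' ≠ c → V c' c) :
    (∀ a, ¬ r a c) ∨ ∀ b, ¬ r c b := by
  by_contra! ⟨⟨a, hac⟩, ⟨b, hcb⟩⟩
  exact hV ⟨a, c, b, hac, hcb, hc a (ne_of_irrefl hac), hc b (ne_of_irrefl' hcb)⟩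

end Bottom

theorem stmt7_general {C : Type*} (A : C → C → Prop) (hA : IsStrictTotalOrder C A)
    (n : ℕ) (V : Fin n → C → C → Prop)
    (hsp : ∀ i, ¬ VValley A (V i)) :
    Set.ncard {c : C | ∃ i, ∀ c', c' ≠ c → V i c' c} ≤ 2 := by
  refine ncard_le_two_of_subset_setOf_isEnd (r := A) ?_
  rintro c ⟨i, hc⟩
  exact isEnd_of_forall_ne_rel_of_not_vValley (hsp i) hc

theorem stmt7 {C : Type*} [Fintype C] (A : C → C → Prop) (hA : IsStrictTotalOrder C A)
    (n : ℕ) (V : Fin n → C → C → Prop)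
    (hV : ∀ i, IsStrictTotalOrder C (V i))
    (hsp : ∀ i, ¬ VValley A (V i)) :
    Set.ncard {c : C | ∃ i, ∀ c', c' ≠ c → V i c' c} ≤ 2 :=
  stmt7_general A hA n V hsp
end

section
/- Let a, b, c be three distinct candidates in a finite set C and let A be an axis (total order) on C. Consider the two partial orders V1 = {a ≻ c, b ≻ c} and V2 = {b ≻ a, c ≻ a} (transitively closed). Both V1 and V2 can be extended to total orders single-peaked with respect to A if and only if b lies between a and c on A (i.e., a ⊳ b ⊳ c or c ⊳ b ⊳ a). -/
def Between {C : Type*} (A : C → C → Prop) (x y z : C) : Prop :=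
  A x y ∧ A y z ∨ A z y ∧ A y x

section

variable {C : Type*} {A : C → C → Prop}

open Function

theorem vValley_swap_iff {T : C → C → Prop} : VValley (swap A) T ↔ VValley A T :=
  ⟨fun ⟨c₁, c₂, c₃, h₁₂, h₂₃, t₁₂, t₃₂⟩ => ⟨c₃, c₂, c₁, h₂₃, h₁₂, t₃₂, t₁₂⟩,
   fun ⟨c₁, c₂, c₃, h₁₂, h₂₃, t₁₂, t₃₂⟩ => ⟨c₃, c₂, c₁, h₂₃, h₁₂, t₃₂, t₁₂⟩⟩

theorem possSP_swap_iff {V : C → C → Prop} : PossSP (swap A) V ↔ PossSP A V := by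
  simp only [PossSP, vValley_swap_iff]

theorem not_between_of_not_vValley {T : C → C → Prop} (hT : ¬ VValley A T) {x y z : C}
    (hxy : T x y) (hzy : T z y) : ¬ Between A x y z := by
  rintro (⟨h₁, h₂⟩ | ⟨h₁, h₂⟩)
  · exact hT ⟨x, y, z, h₁, h₂, hxy, hzy⟩
  · exact hT ⟨z, y, x, h₁, h₂, hzy, hxy⟩

variable [IsStrictTotalOrder C A]

theorem between_of_not_between {x y z : C} (hxy : x ≠ y) (hxz : x ≠ z) (hyz : y ≠ z)
    (hx : ¬ Between A y x z) (hz : ¬ Between A x z y) : Between A x y z := by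
  unfold Between at *
  rcases trichotomous_of A x y with h₁ | h₁ | h₁ <;>
  rcases trichotomous_of A y z with h₂ | h₂ | h₂ <;>
  rcases trichotomous_of A x z with h₃ | h₃ | h₃ <;>
  tauto

theorem not_vValley_self : ¬ VValley A A :=
  fun ⟨_, _, _, _, h₂₃, _, t₃₂⟩ => asymm h₂₃ t₃₂

theorem not_vValley_swap_self : ¬ VValley A (swap A) :=
  fun ⟨_, _, _, h₁₂, _, t₁₂, _⟩ => asymm h₁₂ t₁₂

theorem possSP_of_extends_self {V : C → C → Prop} (h : Extends V A) : PossSP A V :=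
  ⟨A, inferInstance, h, not_vValley_self⟩

theorem possSP_of_extends_swap {V : C → C → Prop} (h : Extends V (swap A)) : PossSP A V :=
  ⟨swap A, inferInstance, h, not_vValley_swap_self⟩

theorem possSP_both_of_lt_of_lt {a b c : C} (hab : A a b) (hbc : A b c) :
    PossSP A (fun x y => (x = a ∧ y = c) ∨ (x = b ∧ y = c)) ∧
    PossSP A (fun x y => (x = b ∧ y = a) ∨ (x = c ∧ y = a)) := by
  have hac : A a c := trans_of A hab hbc
  constructor
  · apply possSP_of_extends_self
    rintro x y (⟨rfl, rfl⟩ | ⟨rfl, rfl⟩) <;> assumption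
  · apply possSP_of_extends_swap
    rintro x y (⟨rfl, rfl⟩ | ⟨rfl, rfl⟩) <;> assumption

end

theorem stmt10_general {C : Type*} (a b c : C)
    (hab : a ≠ b) (hac : a ≠ c) (hbc : b ≠ c)
    (A : C → C → Prop) (hA : IsStrictTotalOrder C A) :
    (PossSP A (fun x y => (x = a ∧ y = c) ∨ (x = b ∧ y = c)) ∧
     PossSP A (fun x y => (x = b ∧ y = a) ∨ (x = c ∧ y = a))) ↔
    ((A a b ∧ A b c) ∨ (A c b ∧ A b a)) := by
  constructor
  · rintro ⟨⟨T₁, -, hV₁, hT₁⟩, ⟨T₂, -, hV₂, hT₂⟩⟩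
    have ha_not_between : ¬ Between A b a c :=
      not_between_of_not_vValley hT₂ (hV₂ b a (.inl ⟨rfl, rfl⟩)) (hV₂ c a (.inr ⟨rfl, rfl⟩))
    have hc_not_between : ¬ Between A a c b :=
      not_between_of_not_vValley hT₁ (hV₁ a c (.inl ⟨rfl, rfl⟩)) (hV₁ b c (.inr ⟨rfl, rfl⟩))
    exact between_of_not_between hab hac hbc ha_not_between hc_not_between
  · rintro (⟨hab', hbc'⟩ | ⟨hcb', hba'⟩)
    · exact possSP_both_of_lt_of_lt hab' hbc'
    · simpa only [possSP_swap_iff] using possSP_both_of_lt_of_lt (A := Function.swap A) hba' hcb'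

theorem stmt10 {C : Type*} [Fintype C] (a b c : C)
    (hab : a ≠ b) (hac : a ≠ c) (hbc : b ≠ c)
    (A : C → C → Prop) (hA : IsStrictTotalOrder C A) :
    (PossSP A (fun x y => (x = a ∧ y = c) ∨ (x = b ∧ y = c)) ∧
     PossSP A (fun x y => (x = b ∧ y = a) ∨ (x = c ∧ y = a))) ↔
    ((A a b ∧ A b c) ∨ (A c b ∧ A b a)) :=
  stmt10_general a b c hab hac hbc A hA
end

section
/- There exists a profile of strict weak orders (in fact, top orders) on a three-element candidate set {a,b,c} that is possibly single-peaked with respect to some axis but whose strict majority relation is not transitive and admits no weak Condorcet winner. Concretely, the profile consisting of one vote b ≻ a ≻ c, two votes c ≻ b ≻ a, and two votes a ≻ (b ∼ c) satisfies: it is possibly single-peaked with respect to the axis a ⊳ b ⊳ c, the majority relation satisfies a >_m c, c >_m b, b >_m a, and there is no candidate x such that no candidate y satisfies y >_m x. -/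
/-- vote b ≻ a ≻ c, with a = 0, b = 1, c = 2 -/
def vote1 : Fin 3 → Fin 3 → Prop :=
  fun x y => (x = 1 ∧ y = 0) ∨ (x = 1 ∧ y = 2) ∨ (x = 0 ∧ y = 2)

/-- vote c ≻ b ≻ a -/
def vote2 : Fin 3 → Fin 3 → Prop :=
  fun x y => (x = 2 ∧ y = 1) ∨ (x = 2 ∧ y = 0) ∨ (x = 1 ∧ y = 0)

/-- vote a ≻ (b ∼ c) -/
def vote3 : Fin 3 → Fin 3 → Prop :=
  fun x y => (x = 0 ∧ y = 1) ∨ (x = 0 ∧ y = 2)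

/-- the profile: one vote b≻a≻c, two votes c≻b≻a, two votes a≻(b∼c) -/
def profile11 : Fin 5 → Fin 3 → Fin 3 → Prop :=
  ![vote1, vote2, vote2, vote3, vote3]

/-- x strictly majority-preferred to y -/
def Maj (x y : Fin 3) : Prop :=
  Set.ncard {i : Fin 5 | profile11 i y x} < Set.ncard {i : Fin 5 | profile11 i x y}

/-- extension of vote3 to a total order a ≻ b ≻ c -/
def vote3T : Fin 3 → Fin 3 → Prop :=
  fun x y => vote3 x y ∨ (x = 1 ∧ y = 2)

lemma sto1 : IsStrictTotalOrder (Fin 3) vote1 where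
  trichotomous := by intro a b; fin_cases a <;> fin_cases b <;> simp [vote1]
  irrefl := by intro a; fin_cases a <;> simp [vote1]
  trans := by intro a b c; fin_cases a <;> fin_cases b <;> fin_cases c <;> simp [vote1]

lemma sto2 : IsStrictTotalOrder (Fin 3) vote2 where
  trichotomous := by intro a b; fin_cases a <;> fin_cases b <;> simp [vote2]
  irrefl := by intro a; fin_cases a <;> simp [vote2]
  trans := by intro a b c; fin_cases a <;> fin_cases b <;> fin_cases c <;> simp [vote2]

lemma sto3 : IsStrictTotalOrder (Fin 3) vote3T where
  trichotomous := by intro a b; fin_cases a <;> fin_cases b <;> simp [vote3T, vote3]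
  irrefl := by intro a; fin_cases a <;> simp [vote3T, vote3]
  trans := by
    intro a b c; fin_cases a <;> fin_cases b <;> fin_cases c <;> simp [vote3T, vote3]

lemma possp1 : PossSP (fun x y : Fin 3 => x < y) vote1 := by
  refine ⟨vote1, sto1, fun x y h => h, ?_⟩
  rintro ⟨x, y, z, h1, h2, h3, h4⟩
  fin_cases x <;> fin_cases y <;> fin_cases z <;> simp_all [vote1]

lemma possp2 : PossSP (fun x y : Fin 3 => x < y) vote2 := by
  refine ⟨vote2, sto2, fun x y h => h, ?_⟩
  rintro ⟨x, y, z, h1, h2, h3, h4⟩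
  fin_cases x <;> fin_cases y <;> fin_cases z <;> simp_all [vote2]

lemma possp3 : PossSP (fun x y : Fin 3 => x < y) vote3 := by
  refine ⟨vote3T, sto3, fun x y h => Or.inl h, ?_⟩
  rintro ⟨x, y, z, h1, h2, h3, h4⟩
  fin_cases x <;> fin_cases y <;> fin_cases z <;> simp_all [vote3T, vote3]

lemma card02 : Set.ncard {i : Fin 5 | profile11 i 0 2} = 3 := by
  have h : {i : Fin 5 | profile11 i 0 2} = ↑({0,3,4} : Finset (Fin 5)) := by
    ext i
    fin_cases i <;>
      simp [profile11, vote1, vote2, vote3, Matrix.vecHead, Matrix.vecTail] <;> decide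
  rw [h, Set.ncard_coe_finset]; decide

lemma card20 : Set.ncard {i : Fin 5 | profile11 i 2 0} = 2 := by
  have h : {i : Fin 5 | profile11 i 2 0} = ↑({1,2} : Finset (Fin 5)) := by
    ext i
    fin_cases i <;>
      simp [profile11, vote1, vote2, vote3, Matrix.vecHead, Matrix.vecTail] <;> decide
  rw [h, Set.ncard_coe_finset]; decide

lemma card21 : Set.ncard {i : Fin 5 | profile11 i 2 1} = 2 := by
  have h : {i : Fin 5 | profile11 i 2 1} = ↑({1,2} : Finset (Fin 5)) := by
    ext i
    fin_cases i <;>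
      simp [profile11, vote1, vote2, vote3, Matrix.vecHead, Matrix.vecTail] <;> decide
  rw [h, Set.ncard_coe_finset]; decide

lemma card12 : Set.ncard {i : Fin 5 | profile11 i 1 2} = 1 := by
  have h : {i : Fin 5 | profile11 i 1 2} = ↑({0} : Finset (Fin 5)) := by
    ext i
    fin_cases i <;>
      simp [profile11, vote1, vote2, vote3, Matrix.vecHead, Matrix.vecTail] <;> decide
  rw [h, Set.ncard_coe_finset]; decide

lemma card10 : Set.ncard {i : Fin 5 | profile11 i 1 0} = 3 := by
  have h : {i : Fin 5 | profile11 i 1 0} = ↑({0,1,2} : Finset (Fin 5)) := by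
    ext i
    fin_cases i <;>
      simp [profile11, vote1, vote2, vote3, Matrix.vecHead, Matrix.vecTail] <;> decide
  rw [h, Set.ncard_coe_finset]; decide

lemma card01 : Set.ncard {i : Fin 5 | profile11 i 0 1} = 2 := by
  have h : {i : Fin 5 | profile11 i 0 1} = ↑({3,4} : Finset (Fin 5)) := by
    ext i
    fin_cases i <;>
      simp [profile11, vote1, vote2, vote3, Matrix.vecHead, Matrix.vecTail] <;> decide
  rw [h, Set.ncard_coe_finset]; decide

lemma maj02 : Maj 0 2 := by unfold Maj; rw [card02, card20]; omega
lemma maj21 : Maj 2 1 := by unfold Maj; rw [card21, card12]; omega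
lemma maj10 : Maj 1 0 := by unfold Maj; rw [card10, card01]; omega

theorem stmt11 :
    (∀ i : Fin 5, PossSP (fun x y : Fin 3 => x < y) (profile11 i)) ∧
    Maj 0 2 ∧ Maj 2 1 ∧ Maj 1 0 ∧
    (∀ x : Fin 3, ∃ y : Fin 3, Maj y x) := by
  refine ⟨?_, maj02, maj21, maj10, ?_⟩
  · intro i
    fin_cases i <;>
      simp only [profile11, Matrix.cons_val_zero, Matrix.cons_val_one, Matrix.vecHead,
        Matrix.vecTail, Matrix.cons_val_fin_one, Fin.mk_one, Matrix.cons_val_succ] <;>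
      first
        | exact possp1
        | exact possp2
        | exact possp3
  · intro x
    fin_cases x
    · exact ⟨1, maj10⟩
    · exact ⟨2, maj21⟩
    · exact ⟨0, maj02⟩
end

section
/- Let V be a strict weak order on a finite candidate set C and A an axis on C. Then V is single-plateaued with respect to A if and only if V contains neither a v-valley nor a nonpeak plateau with respect to A. -/
/-- `V` is single-plateaued w.r.t. `A`: the axis splits into consecutive segments
`X`, `Y`, `Z` where `Y` is exactly the set of maximal elements, `V` strictly increases
along `X`, the elements of `Y` are preferred to everything else, and `V` strictly
decreases along `Z`. -/
def SinglePlateaued {C : Type*} (A V : C → C → Prop) : Prop :=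
  ∃ X Y Z : Set C,
    (∀ c, c ∈ X ∨ c ∈ Y ∨ c ∈ Z) ∧
    Disjoint X Y ∧ Disjoint Y Z ∧ Disjoint X Z ∧
    (∀ x ∈ X, ∀ y ∈ Y, A x y) ∧ (∀ y ∈ Y, ∀ z ∈ Z, A y z) ∧ (∀ x ∈ X, ∀ z ∈ Z, A x z) ∧
    Y = {y | ∀ c, ¬ V c y} ∧
    (∀ x ∈ X, ∀ x' ∈ X, A x x' → V x' x) ∧
    (∀ y ∈ Y, ∀ c ∈ X ∪ Z, V y c) ∧
    (∀ z ∈ Z, ∀ z' ∈ Z, A z z' → V z z')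

/-- A nonpeak plateau w.r.t. `A`: `a ⊳ b ⊳ c` with (`a ≻ b` and `b ∼ c`) or (`c ≻ b` and `b ∼ a`). -/
def NonpeakPlateau {C : Type*} (A V : C → C → Prop) : Prop :=
  ∃ a b c : C, A a b ∧ A b c ∧
    ((V a b ∧ ¬ V b c ∧ ¬ V c b) ∨ (V c b ∧ ¬ V b a ∧ ¬ V a b))

/-
In a single-plateaued order every candidate strictly inside the axis is either
a peak or strictly preferred to one of its two neighbours, which rules out both patterns.
Conversely, peaks exist as C is finite, and in a strict weak order every peak beats every
non-peak, so a non-peak lying between two peaks would be a v-valley: the non-peaks split into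
those left of all peaks and those right of all peaks.  Along the left part, a non-increase
`x ⊳ x'` with `x' ⊁ x` together with any peak `y` gives a v-valley `x ⊳ x' ⊳ y` if `x ≻ x'`
and a nonpeak plateau otherwise; symmetrically on the right.
-/

section

variable {C : Type*} {A V : C → C → Prop}

theorem IsSWO.isStrictWeakOrder (h : IsSWO V) : IsStrictWeakOrder C V where
  irrefl x hx := h.1.1 x x hx hx
  trans := h.1.2
  incomp_trans := h.2

theorem rel_of_not_rel_of_ne [Std.Trichotomous A] {a b : C} (hab : ¬ A a b) (hne : a ≠ b) :
    A b a :=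
  ((trichotomous_of A a b).resolve_left hab).resolve_left hne

theorem exists_forall_not_rel [Finite C] [Nonempty C] [IsStrictOrder C V] :
    ∃ y, ∀ c, ¬ V c y := by
  obtain ⟨y, -, hy⟩ :=
    (Finite.wellFounded_of_trans_of_irrefl V).has_min Set.univ Set.univ_nonempty
  exact ⟨y, fun c => hy c trivial⟩

theorem rel_of_forall_not_rel [IsStrictWeakOrder C V] {y c : C} (hy : ∀ d, ¬ V d y)
    (hc : ¬ ∀ d, ¬ V d c) : V y c := by
  push Not at hc
  obtain ⟨d, hdc⟩ := hc
  by_contra hyc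
  by_cases hyd : V y d
  · exact hyc (_root_.trans hyd hdc)
  · exact (IsStrictWeakOrder.incomp_trans c y d ⟨hy c, hyc⟩ ⟨hyd, hy d⟩).2 hdc

namespace SinglePlateaued

theorem peak_or_rel_of_rel [Std.Asymm A] (h : SinglePlateaued A V) {a b c : C}
    (hab : A a b) (hbc : A b c) : (∀ d, ¬ V d b) ∨ V b a ∨ V b c := by
  obtain ⟨X, Y, Z, hcov, -, -, -, hXY, hYZ, hXZ, rfl, hX, -, hZ⟩ := h
  rcases hcov b with hb | hb | hb
  · have ha : a ∈ X := by
      rcases hcov a with ha | ha | ha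
      · exact ha
      · exact absurd hab (asymm (hXY b hb a ha))
      · exact absurd hab (asymm (hXZ b hb a ha))
    exact Or.inr (Or.inl (hX a ha b hb hab))
  · exact Or.inl hb
  · have hc : c ∈ Z := by
      rcases hcov c with hc | hc | hc
      · exact absurd hbc (asymm (hXZ c hc b hb))
      · exact absurd hbc (asymm (hYZ c hc b hb))
      · exact hc
    exact Or.inr (Or.inr (hZ b hb c hc hbc))

theorem not_vValley [Std.Asymm A] [Std.Asymm V] (h : SinglePlateaued A V) :
    ¬ VValley A V := by
  rintro ⟨a, b, c, hab, hbc, hVab, hVcb⟩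
  rcases h.peak_or_rel_of_rel hab hbc with hb | hba | hbc
  · exact hb a hVab
  · exact asymm hba hVab
  · exact asymm hbc hVcb

theorem not_nonpeakPlateau [Std.Asymm A] [Std.Asymm V] (h : SinglePlateaued A V) :
    ¬ NonpeakPlateau A V := by
  rintro ⟨a, b, c, hab, hbc, ⟨hVab, hnbc, -⟩ | ⟨hVcb, hnba, -⟩⟩ <;>
    rcases h.peak_or_rel_of_rel hab hbc with hb | hba | hbc
  exacts [hb a hVab, asymm hba hVab, hnbc hbc, hb c hVcb, hnba hba, asymm hbc hVcb]

end SinglePlateaued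

theorem singlePlateaued_of_isEmpty [IsEmpty C] : SinglePlateaued A V :=
  ⟨∅, ∅, ∅, isEmptyElim, by simp, by simp, by simp, by simp, by simp, by simp,
    Set.eq_of_subset_of_subset (by simp) (fun c _ => isEmptyElim c), by simp, by simp, by simp⟩

theorem forall_rel_or_forall_rel_of_not_vValley [IsStrictTotalOrder C A]
    [IsStrictWeakOrder C V] (hvalley : ¬ VValley A V) {c : C} (hc : ¬ ∀ d, ¬ V d c) :
    (∀ y, (∀ d, ¬ V d y) → A c y) ∨ (∀ y, (∀ d, ¬ V d y) → A y c) := by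
  have hne : ∀ y, (∀ d, ¬ V d y) → c ≠ y := fun y hy h => hc (h ▸ hy)
  refine or_iff_not_imp_left.2 fun hleft y hy => ?_
  obtain ⟨y₁, hy₁, hcy₁⟩ := not_forall₂.1 hleft
  by_contra hyc
  exact hvalley ⟨y₁, c, y, rel_of_not_rel_of_ne hcy₁ (hne y₁ hy₁),
    rel_of_not_rel_of_ne hyc (hne y hy).symm, rel_of_forall_not_rel hy₁ hc,
    rel_of_forall_not_rel hy hc⟩

theorem singlePlateaued_of_not_vValley_of_not_nonpeakPlateau [Finite C] [Nonempty C]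
    [IsStrictTotalOrder C A] [IsStrictWeakOrder C V]
    (hvalley : ¬ VValley A V) (hplateau : ¬ NonpeakPlateau A V) : SinglePlateaued A V := by
  set Y : Set C := {y | ∀ c, ¬ V c y}
  obtain ⟨y₀, hy₀⟩ : ∃ y, y ∈ Y := exists_forall_not_rel
  have beats : ∀ y ∈ Y, ∀ c ∉ Y, V y c := fun y hy c hc => rel_of_forall_not_rel hy hc
  refine ⟨{c | ∀ y ∈ Y, A c y}, Y, {c | ∀ y ∈ Y, A y c}, ?cover,
    Set.disjoint_left.2 fun c hc hcY => irrefl c (hc c hcY),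
    Set.disjoint_left.2 fun c hcY hc => irrefl c (hc c hcY),
    Set.disjoint_left.2 fun c hcX hcZ => asymm (hcX y₀ hy₀) (hcZ y₀ hy₀),
    fun x hx => hx, fun y hy z hz => hz y hy,
    fun x hx z hz => _root_.trans (hx y₀ hy₀) (hz y₀ hy₀), rfl, ?incr, ?top, ?decr⟩
  case cover =>
    intro c
    by_cases hc : c ∈ Y
    · exact Or.inr (Or.inl hc)
    rcases forall_rel_or_forall_rel_of_not_vValley hvalley hc with hX | hZ
    exacts [Or.inl hX, Or.inr (Or.inr hZ)]
  case incr =>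
    intro x hx x' hx' hxx'
    have hx'Y : x' ∉ Y := fun h => irrefl x' (hx' x' h)
    by_contra hnx'x
    by_cases hxx'' : V x x'
    · exact hvalley ⟨x, x', y₀, hxx', hx' y₀ hy₀, hxx'', beats y₀ hy₀ x' hx'Y⟩
    · exact hplateau
        ⟨x, x', y₀, hxx', hx' y₀ hy₀, Or.inr ⟨beats y₀ hy₀ x' hx'Y, hnx'x, hxx''⟩⟩
  case top =>
    rintro y hy c (hc | hc) <;> exact beats y hy c fun h => irrefl c (hc c h)
  case decr =>
    intro z hz z' hz' hzz'
    have hzY : z ∉ Y := fun h => irrefl z (hz z h)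
    by_contra hnzz'
    by_cases hz'z : V z' z
    · exact hvalley ⟨y₀, z, z', hz y₀ hy₀, hzz', beats y₀ hy₀ z hzY, hz'z⟩
    · exact hplateau
        ⟨y₀, z, z', hz y₀ hy₀, hzz', Or.inl ⟨beats y₀ hy₀ z hzY, hnzz', hz'z⟩⟩

end

theorem stmt12 {C : Type*} [Fintype C] (A V : C → C → Prop)
    (hA : IsStrictTotalOrder C A) (hV : IsSWO V) :
    SinglePlateaued A V ↔ (¬ VValley A V ∧ ¬ NonpeakPlateau A V) := by
  have := hV.isStrictWeakOrder
  refine ⟨fun h => ⟨h.not_vValley, h.not_nonpeakPlateau⟩, fun ⟨hvalley, hplateau⟩ => ?_⟩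
  cases isEmpty_or_nonempty C
  · exact singlePlateaued_of_isEmpty
  · exact singlePlateaued_of_not_vValley_of_not_nonpeakPlateau hvalley hplateau
end

section
/- Let V be a strict weak order on a finite candidate set C and A an axis on C. Then every linear extension of V to a strict total order is single-peaked with respect to A if and only if V is single-plateaued with respect to A and every indifference class of V has size at most two. -/
/-!
Call `m` a weak v-valley of `V` if it lies on the axis between two candidates neither of which it
strictly beats. The linear extension of `V` that breaks every tie against `m` turns a weak v-valley
at `m` into a v-valley, and a v-valley of any extension is a weak v-valley of `V`; so all linear
extensions are single-peaked iff `V` has no weak v-valley. Without weak v-valleys the maximal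
candidates form an axis interval, `V` increases towards it from both sides, and no three candidates
are tied, since the middle one would be a weak v-valley. Conversely, in a single-plateaued order a
weak v-valley can only sit on the plateau between two other plateau candidates.
-/

def WeakVValley {C : Type*} (A V : C → C → Prop) : Prop :=
  ∃ a b c : C, A a b ∧ A b c ∧ ¬ V b a ∧ ¬ V b c

namespace IsSWO

variable {C : Type*} {V : C → C → Prop}

theorem isStrictWeakOrder_s14 (hV : IsSWO V) : IsStrictWeakOrder C V where
  irrefl a h := hV.1.1 a a h h
  trans := hV.1.2
  incomp_trans := hV.2

theorem trans_incomp (hV : IsSWO V) {a b c : C} (hab : V a b) (hbc : ¬ V b c ∧ ¬ V c b) :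
    V a c := by
  by_contra hac
  have hca : ¬ V c a := fun hca => hbc.2 (hV.1.2 _ _ _ hca hab)
  exact (hV.2 a c b ⟨hac, hca⟩ ⟨hbc.2, hbc.1⟩).1 hab

theorem incomp_trans (hV : IsSWO V) {a b c : C} (hab : ¬ V a b ∧ ¬ V b a) (hbc : V b c) :
    V a c := by
  by_contra hac
  have hca : ¬ V c a := fun hca => hab.2 (hV.1.2 _ _ _ hbc hca)
  exact (hV.2 b a c ⟨hab.2, hab.1⟩ ⟨hac, hca⟩).1 hbc

theorem exists_maximal [Finite C] [Nonempty C] (hV : IsSWO V) : ∃ y, ∀ c, ¬ V c y := by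
  have := hV.isStrictWeakOrder_s14
  obtain ⟨y, -, hy⟩ :=
    (Finite.wellFounded_of_trans_of_irrefl V).has_min Set.univ Set.univ_nonempty
  exact ⟨y, fun c => hy c trivial⟩

theorem lt_of_maximal (hV : IsSWO V) {y c : C} (hy : ∀ c, ¬ V c y) (hc : ∃ d, V d c) :
    V y c := by
  obtain ⟨d, hdc⟩ := hc
  by_contra hyc
  exact hy d (hV.trans_incomp hdc ⟨hy c, hyc⟩)

end IsSWO

section LinearExtension

variable {C : Type*} {V : C → C → Prop}

def tieBreak (V L : C → C → Prop) (a b : C) : Prop :=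
  V a b ∨ (¬ V a b ∧ ¬ V b a ∧ L a b)

theorem IsSWO.isStrictTotalOrder_tieBreak (hV : IsSWO V) {L : C → C → Prop}
    [IsStrictTotalOrder C L] : IsStrictTotalOrder C (tieBreak V L) := by
  have := hV.isStrictWeakOrder_s14
  refine { trichotomous := ?_, irrefl := ?_, trans := ?_ }
  · intro a b hab hba
    by_contra hne
    rcases trichotomous_of L a b with h | h | h
    · exact hab (Or.inr ⟨fun h' => hab (Or.inl h'), fun h' => hba (Or.inl h'), h⟩)
    · exact hne h
    · exact hba (Or.inr ⟨fun h' => hba (Or.inl h'), fun h' => hab (Or.inl h'), h⟩)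
  · rintro a (h | ⟨-, -, h⟩)
    exacts [irrefl a h, irrefl a h]
  · rintro a b c (hab | ⟨hab, hba, lab⟩) (hbc | ⟨hbc, hcb, lbc⟩)
    · exact Or.inl (_root_.trans hab hbc)
    · exact Or.inl (hV.trans_incomp hab ⟨hbc, hcb⟩)
    · exact Or.inl (hV.incomp_trans ⟨hab, hba⟩ hbc)
    · obtain ⟨hac, hca⟩ := hV.2 a b c ⟨hab, hba⟩ ⟨hbc, hcb⟩
      exact Or.inr ⟨hac, hca, _root_.trans lab lbc⟩

theorem IsSWO.exists_linearExtension_demote (hV : IsSWO V) (m : C) :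
    ∃ T, IsStrictTotalOrder C T ∧ Extends V T ∧ ∀ a, a ≠ m → ¬ V m a → T a m := by
  classical
  -- `L` puts every `a ≠ m` before `m`, since `False < True`
  let L a b := Prod.Lex (· < ·) WellOrderingRel (a = m, a) (b = m, b)
  have : IsStrictTotalOrder C L :=
    (RelEmbedding.preimage ⟨fun c => (c = m, c), fun _ _ h => congrArg Prod.snd h⟩ _)
      |>.isStrictTotalOrder
  refine ⟨tieBreak V L, hV.isStrictTotalOrder_tieBreak, fun _ _ h => Or.inl h,
    fun a ham hma => ?_⟩
  by_cases ham' : V a m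
  · exact Or.inl ham'
  · exact Or.inr ⟨ham', hma, Prod.Lex.left _ _ (by simpa [lt_iff_le_not_ge] using ham)⟩

end LinearExtension

section Axis

variable {C : Type*} {A V : C → C → Prop}

theorem lt_or_lt_of_not_weakVValley (h : ¬ WeakVValley A V) {a m b : C} (ham : A a m)
    (hmb : A m b) : V m a ∨ V m b := by
  by_contra! hn
  exact h ⟨a, m, b, ham, hmb, hn.1, hn.2⟩

theorem not_vValley_of_not_weakVValley (h : ¬ WeakVValley A V) {T : C → C → Prop}
    [Std.Asymm T] (hVT : Extends V T) : ¬ VValley A T := by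
  rintro ⟨a, b, c, hab, hbc, tab, tcb⟩
  rcases lt_or_lt_of_not_weakVValley h hab hbc with hba | hbc
  exacts [asymm tab (hVT _ _ hba), asymm tcb (hVT _ _ hbc)]

theorem IsSWO.not_weakVValley [Std.Irrefl A] (hV : IsSWO V)
    (h : ∀ T, IsStrictTotalOrder C T → Extends V T → ¬ VValley A T) :
    ¬ WeakVValley A V := by
  rintro ⟨a, m, b, ham, hmb, hma, hmb'⟩
  obtain ⟨T, hT, hVT, hdemote⟩ := hV.exists_linearExtension_demote m
  exact h T hT hVT
    ⟨a, m, b, ham, hmb, hdemote a (ne_of_irrefl ham) hma, hdemote b (ne_of_irrefl' hmb) hmb'⟩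

theorem not_weakVValley_of_singlePlateaued [IsStrictOrder C A] (hSP : SinglePlateaued A V)
    (hsize : ∀ x y z : C, x ≠ y → x ≠ z → y ≠ z →
      (¬ V x y ∧ ¬ V y x) → (¬ V y z ∧ ¬ V z y) → False) :
    ¬ WeakVValley A V := by
  obtain ⟨X, Y, Z, hcov, -, -, -, hAXY, hAYZ, hAXZ, rfl, hX, hYtop, hZ⟩ := hSP
  rintro ⟨a, m, b, ham, hmb, hma, hmb'⟩
  rcases hcov m with hm | hm | hm
  · rcases hcov a with ha | ha | ha
    · exact hma (hX a ha m hm ham)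
    · exact asymm ham (hAXY m hm a ha)
    · exact asymm ham (hAXZ m hm a ha)
  · have hY : ∀ c, ¬ V m c → c ∈ {y | ∀ c, ¬ V c y} := fun c hmc => by
      rcases hcov c with hc | hc | hc
      exacts [absurd (hYtop m hm c (.inl hc)) hmc, hc, absurd (hYtop m hm c (.inr hc)) hmc]
    exact hsize a m b (ne_of_irrefl ham) (ne_of_irrefl (_root_.trans ham hmb))
      (ne_of_irrefl hmb) ⟨hm a, hY a hma m⟩ ⟨hY b hmb' m, hm b⟩
  · rcases hcov b with hb | hb | hb
    · exact asymm hmb (hAXZ b hb m hm)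
    · exact asymm hmb (hAYZ b hb m hm)
    · exact hmb' (hZ m hm b hb hmb)

theorem IsSWO.no_incomp_triple [IsStrictTotalOrder C A] (hV : IsSWO V) (h : ¬ WeakVValley A V) :
    ∀ x y z : C, x ≠ y → x ≠ z → y ≠ z →
      (¬ V x y ∧ ¬ V y x) → (¬ V y z ∧ ¬ V z y) → False := by
  intro x y z hxy hxz hyz ⟨hxy', hyx'⟩ ⟨hyz', hzy'⟩
  obtain ⟨hxz', hzx'⟩ := hV.2 x y z ⟨hxy', hyx'⟩ ⟨hyz', hzy'⟩
  have htri := trichotomous_of A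
  have htrans : ∀ a b c : C, A a b → A b c → A a c := fun _ _ _ => _root_.trans
  simp only [WeakVValley, not_exists] at h
  -- one of `x`, `y`, `z` lies between the other two on the axis
  grind

theorem forall_maximal_left_or_right [IsStrictTotalOrder C A] (h : ¬ WeakVValley A V) {c : C}
    (hc : ∃ d, V d c) :
    (∀ y, (∀ d, ¬ V d y) → A c y) ∨ (∀ y, (∀ d, ¬ V d y) → A y c) := by
  obtain ⟨d, hdc⟩ := hc
  by_contra! hn
  obtain ⟨⟨y, hy, hcy⟩, ⟨y', hy', hy'c⟩⟩ := hn
  have hne : ∀ {y}, (∀ d, ¬ V d y) → c ≠ y := fun hy hcy => (hcy ▸ hy) d hdc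
  have hyc : A y c := ((trichotomous_of A c y).resolve_left hcy).resolve_left (hne hy)
  have hcy' : A c y' := ((trichotomous_of A y' c).resolve_left hy'c).resolve_left (hne hy').symm
  rcases lt_or_lt_of_not_weakVValley h hyc hcy' with hcy | hcy'
  exacts [hy c hcy, hy' c hcy']

theorem IsSWO.singlePlateaued [Finite C] [IsStrictTotalOrder C A] (hV : IsSWO V)
    (h : ¬ WeakVValley A V) : SinglePlateaued A V := by
  set Y := {y | ∀ c, ¬ V c y}
  have hYne (c : C) : Y.Nonempty := have : Nonempty C := ⟨c⟩; hV.exists_maximal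
  set X := {c | ∀ y ∈ Y, A c y}
  set Z := {c | ∀ y ∈ Y, A y c}
  have hXY : Disjoint X Y := Set.disjoint_left.2 fun c hc hcY => irrefl c (hc c hcY)
  have hYZ : Disjoint Y Z := Set.disjoint_left.2 fun c hcY hc => irrefl c (hc c hcY)
  refine ⟨X, Y, Z, fun c => ?_, hXY, hYZ, Set.disjoint_left.2 fun c hcX hcZ => ?_,
    fun x hx y hy => hx y hy, fun y hy z hz => hz y hy, fun x hx z hz => ?_, rfl,
    fun x hx x' hx' hxx' => ?_, fun y hy c hc => ?_, fun z hz z' hz' hzz' => ?_⟩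
  · by_cases hc : c ∈ Y
    · exact .inr (.inl hc)
    · rcases forall_maximal_left_or_right h (by simpa [Y] using hc) with hcX | hcZ
      exacts [.inl hcX, .inr (.inr hcZ)]
  · obtain ⟨y, hy⟩ := hYne c
    exact asymm (hcX y hy) (hcZ y hy)
  · obtain ⟨y, hy⟩ := hYne x
    exact _root_.trans (hx y hy) (hz y hy)
  · obtain ⟨y, hy⟩ := hYne x
    exact (lt_or_lt_of_not_weakVValley h hxx' (hx' y hy)).resolve_right (hy x')
  · have hcY : c ∉ Y := by
      rcases hc with hc | hc
      exacts [hXY.notMem_of_mem_left hc, hYZ.notMem_of_mem_right hc]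
    exact hV.lt_of_maximal hy (by simpa [Y] using hcY)
  · obtain ⟨y, hy⟩ := hYne z
    exact (lt_or_lt_of_not_weakVValley h (hz y hy) hzz').resolve_left (hy z)

end Axis

theorem stmt14 {C : Type*} [Fintype C] (A V : C → C → Prop)
    (hA : IsStrictTotalOrder C A) (hV : IsSWO V) :
    (∀ T : C → C → Prop, IsStrictTotalOrder C T → Extends V T → ¬ VValley A T) ↔
      (SinglePlateaued A V ∧
        ∀ x y z : C, x ≠ y → x ≠ z → y ≠ z →
          (¬ V x y ∧ ¬ V y x) → (¬ V y z ∧ ¬ V z y) → False) := by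
  constructor
  · intro h
    have hW := hV.not_weakVValley h
    exact ⟨hV.singlePlateaued hW, hV.no_incomp_triple hW⟩
  · rintro ⟨hSP, hsize⟩ T hT hVT
    exact not_vValley_of_not_weakVValley (not_weakVValley_of_singlePlateaued hSP hsize) hVT
end

section
/- Let P be a profile of strict weak orders on candidate set C containing at least one strict total order, and suppose a truth assignment on variables {xy : x,y ∈ C, x ≠ y} satisfies: (1) for every vote V in P and all distinct a,b,c with a ≻ b and c ≻ b in V, the clauses (ba ∨ cb) and (ab ∨ bc) hold; (2) for every distinct pair a,b, exactly one of ab and ba is true. Then the binary relation A = {(a,b) : ab is true} is a strict total order on C and serves as an axis with respect to which P is possibly single-peaked. -/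
/-!
The clauses say that the bottom `b` of any triple `a, c ≻ b` of a vote is never placed
between `a` and `c` on the axis. For the vote that is a total order, every triple has a bottom,
and on a directed 3-cycle every element lies between the other two; so the tournament chosen
by the variables has no 3-cycle and is a strict total order. For each vote the same clauses
forbid v-valleys, and a strict weak order without v-valleys extends to a total order without
v-valleys: break each tie towards the left for candidates that already have a strictly
preferred candidate on their left, and towards the right otherwise.
-/

section StrictWeakOrder

variable {C : Type*} {V : C → C → Prop}

theorem IsSWO.rel_of_rel_of_incomp (hV : IsSWO V) {x y z : C} (hxy : V x y) (hyz : ¬V y z)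
    (hzy : ¬V z y) : V x z := by
  by_contra hxz
  by_cases hzx : V z x
  · exact hzy (hV.1.2 _ _ _ hzx hxy)
  · exact (hV.2 x z y ⟨hxz, hzx⟩ ⟨hzy, hyz⟩).1 hxy

theorem IsSWO.rel_of_incomp_of_rel (hV : IsSWO V) {x y z : C} (hxy : ¬V x y) (hyx : ¬V y x)
    (hyz : V y z) : V x z := by
  by_contra hxz
  by_cases hzx : V z x
  · exact hyx (hV.1.2 _ _ _ hyz hzx)
  · exact (hV.2 y x z ⟨hyx, hxy⟩ ⟨hxz, hzx⟩).1 hyz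

def refineBy (V B : C → C → Prop) (x y : C) : Prop :=
  V x y ∨ (¬V x y ∧ ¬V y x ∧ B x y)

theorem IsSWO.isStrictTotalOrder_refineBy {B : C → C → Prop} (hV : IsSWO V)
    [IsStrictTotalOrder C B] : IsStrictTotalOrder C (refineBy V B) where
  trichotomous x y hxy hyx := by
    by_contra hne
    rcases trichotomous (r := B) x y with h | h | h <;> unfold refineBy at * <;> tauto
  irrefl x := by
    rintro (h | ⟨-, -, h⟩)
    exacts [hV.1.1 x x h h, irrefl x h]
  trans x y z := by
    rintro (hxy | ⟨nxy, nyx, bxy⟩) (hyz | ⟨nyz, nzy, byz⟩)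
    · exact .inl (hV.1.2 _ _ _ hxy hyz)
    · exact .inl (hV.rel_of_rel_of_incomp hxy nyz nzy)
    · exact .inl (hV.rel_of_incomp_of_rel nxy nyx hyz)
    · obtain ⟨nxz, nzx⟩ := hV.2 x y z ⟨nxy, nyx⟩ ⟨nyz, nzy⟩
      exact .inr ⟨nxz, nzx, _root_.trans bxy byz⟩

end StrictWeakOrder

section TieBreak

variable {C : Type*} (A V : C → C → Prop)

def HasBetterOnLeft (x : C) : Prop :=
  ∃ s, V s x ∧ A s x

def axisTieBreak (x y : C) : Prop :=
  (HasBetterOnLeft A V y ∧ A x y) ∨ (¬HasBetterOnLeft A V x ∧ A y x)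

variable {A V}

theorem isStrictTotalOrder_axisTieBreak [IsStrictTotalOrder C A] :
    IsStrictTotalOrder C (axisTieBreak A V) where
  trichotomous x y hxy hyx := by
    by_contra hne
    rcases trichotomous (r := A) x y with h | h | h <;> unfold axisTieBreak at * <;> tauto
  irrefl x := by
    rintro (⟨-, h⟩ | ⟨-, h⟩) <;> exact irrefl x h
  trans x y z := by
    rintro (⟨hy, hxy⟩ | ⟨hx, hyx⟩) (⟨hz, hyz⟩ | ⟨hy', hzy⟩)
    · exact .inl ⟨hz, _root_.trans hxy hyz⟩
    · exact absurd hy hy'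
    · rcases trichotomous (r := A) x z with h | rfl | h
      · exact .inl ⟨hz, h⟩
      · exact absurd hz hx
      · exact .inr ⟨hx, h⟩
    · exact .inr ⟨hx, _root_.trans hzy hyx⟩

theorem not_vValley_refineBy_axisTieBreak (hV : IsSWO V) [IsStrictTotalOrder C A]
    (hno : ¬VValley A V) : ¬VValley A (refineBy V (axisTieBreak A V)) := by
  rintro ⟨c1, c2, c3, h12, h23, t12, t32⟩
  -- a candidate `s` with `s ≻ c2` and `s ⊳ c2` plays the role of `c1`
  have left : ∃ s, V s c2 ∧ A s c2 := by
    rcases t12 with v12 | ⟨-, -, ⟨hR, -⟩ | ⟨-, h21⟩⟩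
    exacts [⟨c1, v12, h12⟩, hR, absurd h21 (asymm h12)]
  obtain ⟨s, vs2, hs2⟩ := left
  rcases t32 with v32 | ⟨n32, n23, ⟨-, h32⟩ | ⟨hR3, -⟩⟩
  · exact hno ⟨s, c2, c3, hs2, h23, vs2, v32⟩
  · exact asymm h23 h32
  · exact hR3 ⟨s, hV.rel_of_rel_of_incomp vs2 n23 n32, _root_.trans hs2 h23⟩

theorem possSP_of_not_vValley (hV : IsSWO V) [IsStrictTotalOrder C A] (hno : ¬VValley A V) :
    PossSP A V :=
  haveI := isStrictTotalOrder_axisTieBreak (A := A) (V := V)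
  ⟨_, hV.isStrictTotalOrder_refineBy, fun _ _ => .inl, not_vValley_refineBy_axisTieBreak hV hno⟩

end TieBreak

theorem IsSPO.exists_bottom_of_three {C : Type*} {W : C → C → Prop} (hW : IsSPO W)
    (htotal : ∀ x y : C, x ≠ y → W x y ∨ W y x) {a b c : C} (hab : a ≠ b) (hbc : b ≠ c)
    (hac : a ≠ c) : (W b a ∧ W c a) ∨ (W a b ∧ W c b) ∨ (W a c ∧ W b c) := by
  rcases htotal a b hab with h₁ | h₁ <;> rcases htotal b c hbc with h₂ | h₂ <;>
    rcases htotal a c hac with h₃ | h₃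
  all_goals first
    | tauto
    | exact (hW.1 _ _ (hW.2 _ _ _ h₁ h₂) h₃).elim
    | exact (hW.1 _ _ (hW.2 _ _ _ h₂ h₁) h₃).elim

section Axis

variable {C : Type*} {f : C → C → Bool}

def axisOf (f : C → C → Bool) (a b : C) : Prop :=
  a ≠ b ∧ f a b = true

theorem axisOf_asymm (hf : ∀ a b : C, a ≠ b → Xor (f a b = true) (f b a = true)) {a b : C}
    (hab : axisOf f a b) (hba : axisOf f b a) : False := by
  rcases hf a b hab.1 with ⟨-, h⟩ | ⟨-, h⟩
  exacts [h hba.2, h hab.2]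

theorem not_axisOf_between (hf : ∀ a b : C, a ≠ b → Xor (f a b = true) (f b a = true))
    {a b c : C} (hclause : f b a = true ∨ f c b = true) (hab : axisOf f a b)
    (hbc : axisOf f b c) : False := by
  rcases hclause with h | h
  exacts [axisOf_asymm hf hab ⟨hab.1.symm, h⟩, axisOf_asymm hf hbc ⟨hbc.1.symm, h⟩]

theorem isStrictTotalOrder_axisOf (hf : ∀ a b : C, a ≠ b → Xor (f a b = true) (f b a = true))
    {W : C → C → Prop} (hW : IsSPO W) (htotal : ∀ x y : C, x ≠ y → W x y ∨ W y x)
    (hbetween : ∀ a b c : C, a ≠ c → W a b → W c b → axisOf f a b → axisOf f b c → False) :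
    IsStrictTotalOrder C (axisOf f) where
  trichotomous a b hab hba := by
    by_contra hne
    rcases hf a b hne with ⟨h, -⟩ | ⟨h, -⟩
    exacts [hab ⟨hne, h⟩, hba ⟨Ne.symm hne, h⟩]
  irrefl a h := h.1 rfl
  trans a b c hab hbc := by
    have hac : a ≠ c := by
      rintro rfl
      exact axisOf_asymm hf hab hbc
    by_contra hnac
    have hca : axisOf f c a := by
      rcases hf a c hac with ⟨h, -⟩ | ⟨h, -⟩
      exacts [absurd ⟨hac, h⟩ hnac, ⟨hac.symm, h⟩]
    rcases hW.exists_bottom_of_three htotal hab.1 hbc.1 hac with ⟨hb, hc⟩ | ⟨ha, hc⟩ | ⟨ha, hb⟩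
    · exact hbetween c a b hbc.1.symm hc hb hca hab
    · exact hbetween a b c hac ha hc hab hbc
    · exact hbetween b c a hab.1.symm hb ha hbc hca

end Axis

theorem stmt17_general {C : Type*} (n : ℕ) (V : Fin n → C → C → Prop)
    (hV : ∀ i, IsSWO (V i))
    (i0 : Fin n) (htotal : ∀ x y : C, x ≠ y → V i0 x y ∨ V i0 y x)
    (f : C → C → Bool)
    (h1 : ∀ i, ∀ a b c : C, a ≠ b → a ≠ c → b ≠ c → V i a b → V i c b →
      (f b a = true ∨ f c b = true) ∧ (f a b = true ∨ f b c = true))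
    (h2 : ∀ a b : C, a ≠ b → Xor' (f a b = true) (f b a = true)) :
    IsStrictTotalOrder C (fun a b : C => a ≠ b ∧ f a b = true) ∧
    ∀ i, PossSP (fun a b : C => a ≠ b ∧ f a b = true) (V i) := by
  have hbetween : ∀ i, ∀ a b c : C, a ≠ c → V i a b → V i c b →
      axisOf f a b → axisOf f b c → False := fun i a b c hac hab hcb hab' hbc' =>
    not_axisOf_between h2 (h1 i a b c hab'.1 hac hbc'.1 hab hcb).1 hab' hbc'
  have hA : IsStrictTotalOrder C (fun a b : C => a ≠ b ∧ f a b = true) :=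
    isStrictTotalOrder_axisOf h2 (hV i0).1 htotal (hbetween i0)
  refine ⟨hA, fun i => possSP_of_not_vValley (hV i) ?_⟩
  rintro ⟨c1, c2, c3, h12, h23, v12, v32⟩
  exact hbetween i c1 c2 c3 (fun h => axisOf_asymm h2 h12 (h ▸ h23)) v12 v32 h12 h23

theorem stmt17 {C : Type*} [Fintype C] (n : ℕ) (V : Fin n → C → C → Prop)
    (hV : ∀ i, IsSWO (V i))
    (i0 : Fin n) (htotal : ∀ x y : C, x ≠ y → V i0 x y ∨ V i0 y x)
    (f : C → C → Bool)
    (h1 : ∀ i, ∀ a b c : C, a ≠ b → a ≠ c → b ≠ c → V i a b → V i c b →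
      (f b a = true ∨ f c b = true) ∧ (f a b = true ∨ f b c = true))
    (h2 : ∀ a b : C, a ≠ b → Xor' (f a b = true) (f b a = true)) :
    IsStrictTotalOrder C (fun a b : C => a ≠ b ∧ f a b = true) ∧
    ∀ i, PossSP (fun a b : C => a ≠ b ∧ f a b = true) (V i) :=
  stmt17_general n V hV i0 htotal f h1 h2
end
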